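/- Let U be a maximal unlinked set in F_p^{2k} with respect to Φ_k, written as U = V + a' for a subspace V and some a'. Then for a ∈ F_p^{2k}, the translate U + a is also a maximal unlinked set if and only if the odd-coordinate projection Q(a) lies in P(V)^⊥. -/
import Mathlib


open Finset

/-- `Φ_k(u,v) = ∑ i, u_{i1} (v_{i2} - u_{i2})` on `𝔽_p^{2k}`, realized as
`Fin k → ZMod p × ZMod p` (first component = odd coordinate, second
component = even coordinate). -/
def Phik (p k : ℕ) (u v : Fin k → ZMod p × ZMod p) : ZMod p :=
  ∑ i, (u i).1 * ((v i).2 - (u i).2)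

/-- A set is unlinked if `Φ_k` vanishes on all ordered pairs from it. -/
def Unlinked (p k : ℕ) (U : Set (Fin k → ZMod p × ZMod p)) : Prop :=
  ∀ u ∈ U, ∀ v ∈ U, Phik p k u v = 0

/-- A maximal unlinked set: unlinked and not properly contained in any other
unlinked set. -/
def MaximalUnlinked (p k : ℕ) (U : Set (Fin k → ZMod p × ZMod p)) : Prop :=
  Unlinked p k U ∧ ∀ U', Unlinked p k U' → U ⊆ U' → U' = U

/-- auxiliary bilinear form -/
def Bf (p k : ℕ) (u v : Fin k → ZMod p × ZMod p) : ZMod p :=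
  ∑ i, (u i).1 * (v i).2

lemma Phik_eq_Bf (p k : ℕ) (u v : Fin k → ZMod p × ZMod p) :
    Phik p k u v = Bf p k u v - Bf p k u u := by
  simp [Phik, Bf, mul_sub, Finset.sum_sub_distrib]

lemma Bf_add_right (p k : ℕ) (u v w : Fin k → ZMod p × ZMod p) :
    Bf p k u (v + w) = Bf p k u v + Bf p k u w := by
  simp [Bf, mul_add, Finset.sum_add_distrib]

lemma Bf_add_left (p k : ℕ) (u v w : Fin k → ZMod p × ZMod p) :
    Bf p k (u + v) w = Bf p k u w + Bf p k v w := by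
  simp [Bf, add_mul, Finset.sum_add_distrib]

lemma Bf_sub_right (p k : ℕ) (u v w : Fin k → ZMod p × ZMod p) :
    Bf p k u (v - w) = Bf p k u v - Bf p k u w := by
  simp [Bf, mul_sub, Finset.sum_sub_distrib]

lemma Bf_sub_left (p k : ℕ) (u v w : Fin k → ZMod p × ZMod p) :
    Bf p k (u - v) w = Bf p k u w - Bf p k v w := by
  simp [Bf, sub_mul, Finset.sum_sub_distrib]

lemma Bf_neg_right (p k : ℕ) (u v : Fin k → ZMod p × ZMod p) :
    Bf p k u (-v) = -Bf p k u v := by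
  simp [Bf, mul_neg, Finset.sum_neg_distrib]

lemma Bf_neg_left (p k : ℕ) (u v : Fin k → ZMod p × ZMod p) :
    Bf p k (-u) v = -Bf p k u v := by
  simp [Bf, neg_mul, Finset.sum_neg_distrib]

lemma Bf_zero_right (p k : ℕ) (u : Fin k → ZMod p × ZMod p) :
    Bf p k u 0 = 0 := by simp [Bf]

/-- Differences of points of an unlinked set are biorthogonal for `Bf`. -/
lemma unlinked_diff {p k : ℕ} {S : Set (Fin k → ZMod p × ZMod p)}
    (hS : Unlinked p k S) :
    ∀ u ∈ S, ∀ v ∈ S, ∀ u' ∈ S, ∀ v' ∈ S,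
      Bf p k (u - v) (u' - v') = 0 := by
  have key : ∀ s ∈ S, ∀ t ∈ S, Bf p k s t = Bf p k s s := by
    intro s hs t ht
    have h := hS s hs t ht
    rw [Phik_eq_Bf] at h
    linear_combination h
  intro u hu v hv u' hu' v' hv'
  rw [Bf_sub_left, Bf_sub_right, Bf_sub_right, key u hu u' hu', key u hu v' hv',
    key v hv u' hu', key v hv v' hv']
  ring

/-- Let `U = V + a'` be a maximal unlinked set in `𝔽_p^{2k}` (`V` a
subspace).  For `a ∈ 𝔽_p^{2k}`, the translate `U + a` is again a maximal
unlinked set if and only if the odd-coordinate projection `Q(a)` lies in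
`P(V)^⊥`, i.e. `∑ i, a_{i1} v_{i2} = 0` for all `v ∈ V`. -/
theorem translate_maximalUnlinked_iff_proj_perp
    (p k : ℕ) (hp : p.Prime) (hk : 1 ≤ k)
    (V : Submodule (ZMod p) (Fin k → ZMod p × ZMod p))
    (a' : Fin k → ZMod p × ZMod p)
    (U : Set (Fin k → ZMod p × ZMod p))
    (hUV : U = (fun x => x + a') '' (V : Set _))
    (hU : MaximalUnlinked p k U)
    (a : Fin k → ZMod p × ZMod p) :
    MaximalUnlinked p k ((fun x => x + a) '' U) ↔
      ∀ v ∈ V, ∑ i, (a i).1 * (v i).2 = 0 := by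
  subst hUV
  -- Step 1: V is Bf-biorthogonal and a' is Bf-orthogonal to V on the left.
  have h1 : ∀ x ∈ V, ∀ y ∈ V, Bf p k (x + a') y = Bf p k (x + a') x := by
    intro x hx y hy
    have h := hU.1 (x + a') ⟨x, hx, rfl⟩ (y + a') ⟨y, hy, rfl⟩
    rw [Phik_eq_Bf, Bf_add_right, Bf_add_right] at h
    linear_combination h
  have h2 : ∀ x ∈ V, ∀ y ∈ V, Bf p k (x + a') y = 0 := by
    intro x hx y hy
    have h0 := h1 x hx 0 V.zero_mem
    rw [Bf_zero_right] at h0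
    rw [h1 x hx y hy, ← h0]
  have hBa' : ∀ y ∈ V, Bf p k a' y = 0 := by
    intro y hy
    have := h2 0 V.zero_mem y hy
    rwa [zero_add] at this
  have hBV : ∀ x ∈ V, ∀ y ∈ V, Bf p k x y = 0 := by
    intro x hx y hy
    have := h2 x hx y hy
    rw [Bf_add_left, hBa' y hy, add_zero] at this
    exact this
  -- Step 2: from maximality, any w with zero second components that is
  -- left-Bf-orthogonal to V lies in V.
  have hW : ∀ w : Fin k → ZMod p × ZMod p, (∀ i, (w i).2 = 0) →
      (∀ v ∈ V, Bf p k w v = 0) → w ∈ V := by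
    intro w hw2 hwperp
    have hBw0 : ∀ u : Fin k → ZMod p × ZMod p, Bf p k u w = 0 := by
      intro u; simp [Bf, hw2]
    set S : Set (Fin k → ZMod p × ZMod p) :=
      ((fun x => x + a') '' (V : Set _)) ∪ {w + a'} with hSdef
    have hSun : Unlinked p k S := by
      rintro u hu v hv
      rw [Phik_eq_Bf]
      rcases hu with ⟨x, hx, rfl⟩ | hu
      · rcases hv with ⟨y, hy, rfl⟩ | hv
        · rw [Bf_add_right, Bf_add_right, Bf_add_left, Bf_add_left, Bf_add_left]
          linear_combination hBV x hx y hy + hBa' y hy - hBV x hx x hx - hBa' x hx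
        · rcases hv with rfl
          rw [Bf_add_right, Bf_add_right, Bf_add_left, Bf_add_left, Bf_add_left]
          linear_combination hBw0 x + hBw0 a' - hBV x hx x hx - hBa' x hx
      · rcases hu with rfl
        rcases hv with ⟨y, hy, rfl⟩ | hv
        · rw [Bf_add_right, Bf_add_right, Bf_add_left, Bf_add_left, Bf_add_left]
          linear_combination hwperp y hy + hBa' y hy - hBw0 w - hBw0 a'
        · rcases hv with rfl
          ring
    have hSU := hU.2 S hSun Set.subset_union_left
    have hwU : w + a' ∈ (fun x => x + a') '' (V : Set _) := by
      rw [← hSU]; exact Set.mem_union_right _ rfl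
    obtain ⟨x, hx, hxe⟩ := hwU
    have : x = w := by exact add_right_cancel hxe
    rwa [← this]
  constructor
  · -- forward direction
    intro hmax v hv
    have hmem1 : a' + a ∈ (fun x => x + a) '' ((fun x => x + a') '' (V : Set _)) :=
      ⟨a', ⟨0, V.zero_mem, zero_add a'⟩, rfl⟩
    have hmem2 : (v + a') + a ∈ (fun x => x + a) '' ((fun x => x + a') '' (V : Set _)) :=
      ⟨v + a', ⟨v, hv, rfl⟩, rfl⟩
    have h := hmax.1 (a' + a) hmem1 ((v + a') + a) hmem2
    rw [Phik_eq_Bf, Bf_add_right, Bf_add_right, Bf_add_right, Bf_add_left] at h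
    have : Bf p k a v = 0 := by linear_combination h - hBa' v hv
    simpa [Bf] using this
  · -- reverse direction
    intro ha
    have haB : ∀ v ∈ V, Bf p k a v = 0 := by
      intro v hv
      simpa [Bf] using ha v hv
    constructor
    · rintro _ ⟨_, ⟨x, hx, rfl⟩, rfl⟩ _ ⟨_, ⟨y, hy, rfl⟩, rfl⟩
      rw [Phik_eq_Bf]
      simp only [Bf_add_right, Bf_add_left]
      linear_combination hBV x hx y hy + hBa' y hy + haB y hy
        - hBV x hx x hx - hBa' x hx - haB x hx
    · intro U' hU' hsub
      -- the vector w = (a_1, 0) lies in V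
      set w : Fin k → ZMod p × ZMod p := fun i => ((a i).1, 0) with hwdef
      have hwV : w ∈ V := by
        refine hW w (fun i => rfl) (fun v hv => ?_)
        have : Bf p k w v = Bf p k a v := rfl
        rw [this]; exact haB v hv
      -- key: Bf a (v - u) = 0 for u, v ∈ U'
      have keya : ∀ u ∈ U', ∀ v ∈ U', Bf p k a (v - u) = 0 := by
        intro u hu v hv
        have hm1 : (w + a' + a) ∈ U' := hsub ⟨w + a', ⟨w, hwV, rfl⟩, rfl⟩
        have hm2 : (a' + a) ∈ U' := hsub ⟨a', ⟨0, V.zero_mem, zero_add a'⟩, rfl⟩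
        have h := unlinked_diff hU' (w + a' + a) hm1 (a' + a) hm2 v hv u hu
        have hww : w + a' + a - (a' + a) = w := by abel
        rw [hww] at h
        have : Bf p k a (v - u) = Bf p k w (v - u) := rfl
        rw [this]; exact h
      -- translate U' back by a; it is unlinked and contains U
      set T : Set (Fin k → ZMod p × ZMod p) := (fun x => x + (-a)) '' U' with hTdef
      have hT : Unlinked p k T := by
        rintro _ ⟨u, hu, rfl⟩ _ ⟨v, hv, rfl⟩
        have h := hU' u hu v hv
        rw [Phik_eq_Bf] at h ⊢
        have hk := keya u hu v hv
        rw [Bf_sub_right] at hk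
        simp only [Bf_add_right, Bf_add_left]
        simp only [Bf_neg_right, Bf_neg_left]
        linear_combination h - hk
      have hUT : (fun x => x + a') '' (V : Set _) ⊆ T := by
        rintro u hu
        exact ⟨u + a, hsub ⟨u, hu, rfl⟩, add_neg_cancel_right u a⟩
      have hTU := hU.2 T hT hUT
      apply Set.Subset.antisymm
      · intro z hz
        have hzT : z + (-a) ∈ T := ⟨z, hz, rfl⟩
        rw [hTU] at hzT
        exact ⟨z + (-a), hzT, neg_add_cancel_right z a⟩
      · exact hsub
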